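/- Let K ⊴ N ⊴ G be finite groups with N = K·Z(N), Z(K) = K ∩ Z(N), O_p(N) ≤ Z(N), and both K and N normal in G. Then there is a bijection between the set of G-orbits of p-chains of N starting with O_p(N) and the set of G-orbits of p-chains of K starting with O_p(K); this bijection preserves the lengths of chains and the G-stabilizers of corresponding chains are equal. -/

import Mathlib

/-!
Since `K ⊴ N`, `O_p(K) = O_p(N) ∩ K`. A `p`-subgroup `P` of `N = K·Z(N)` containing
`O_p(N)` satisfies `P = O_p(N)·(P ∩ K)`: write `x ∈ P` as `x = k z` with `k ∈ K`, `z ∈ Z(N)`;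
some power `x = x ^ j = k ^ j z ^ j` makes `z ^ j` a central `p`-element, hence in `O_p(N)`.
Conversely `O_p(N)·Q ∩ K = Q` for `O_p(K) ≤ Q ≤ K` by Dedekind's law. Hence `P ↦ P ∩ K` and
`Q ↦ O_p(N)·Q` are mutually inverse monotone maps commuting with conjugation by `G` (as `K`
and `O_p(N)` are normal in `G`), and they transport chains, orbits and stabilizers.
-/

/-- The `p`-core `O_p(G)`: the join of all normal `p`-subgroups of `G`
(for a finite group this is the largest normal `p`-subgroup). -/
def pCore (p : ℕ) (G : Type*) [Group G] : Subgroup G :=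
  ⨆ K ∈ {K : Subgroup G | K.Normal ∧ IsPGroup p K}, K

/-- Conjugate of a subgroup by a group element. -/
def conjSub {G : Type*} [Group G] (g : G) (H : Subgroup G) : Subgroup G :=
  H.map (MulAut.conj g).toMonoidHom

/-- `C` is (the set of terms of) a `p`-chain of the subgroup `B` of `G`
starting with `U`: a finite, totally ordered set of `p`-subgroups of `B`,
all containing the first term `U`. -/
def IsPChainSet (p : ℕ) {G : Type*} [Group G] (B U : Subgroup G)
    (C : Set (Subgroup G)) : Prop :=
  C.Finite ∧ U ∈ C ∧ (∀ P ∈ C, IsPGroup p P ∧ U ≤ P ∧ P ≤ B) ∧ IsChain (· ≤ ·) C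

open scoped Pointwise

section Conjugation

variable {G : Type*} [Group G]

lemma conjSub_one : conjSub (1 : G) = id := by
  funext H
  ext x
  simp [conjSub]

lemma conjSub_eq_self {H : Subgroup G} (hH : H.Normal) (g : G) : conjSub g H = H :=
  hH.conjAct (ConjAct.toConjAct g)

lemma commute_inf_conjSub (K : Subgroup G) [hK : K.Normal] (g : G) :
    Function.Commute (· ⊓ K) (conjSub g) := fun H => by
  change conjSub g H ⊓ K = conjSub g (H ⊓ K)
  conv_lhs => rw [← conjSub_eq_self hK g]
  exact (Subgroup.map_inf H K (MulAut.conj g).toMonoidHom (MulAut.conj g).injective).symm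

lemma commute_sup_conjSub (O : Subgroup G) [hO : O.Normal] (g : G) :
    Function.Commute (O ⊔ ·) (conjSub g) := fun H => by
  change O ⊔ conjSub g H = conjSub g (O ⊔ H)
  conv_lhs => rw [← conjSub_eq_self hO g]
  exact (Subgroup.map_sup O H _).symm

end Conjugation

section Orbits

variable {ι α : Type*} {f g : α → α} {s t : Set α}

lemma exists_image_eq_iff_of_leftInvOn {c : ι → α → α} (hf : ∀ i, Function.Commute f (c i))
    (hg : ∀ i, Function.Commute g (c i)) (hs : Set.LeftInvOn g f s) (ht : Set.LeftInvOn g f t) :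
    (∃ i, c i '' s = t) ↔ ∃ i, c i '' (f '' s) = f '' t := by
  refine ⟨fun ⟨i, h⟩ => ⟨i, ?_⟩, fun ⟨i, h⟩ => ⟨i, ?_⟩⟩
  · rw [← h, Set.image_comm fun a => (hf i a).symm]
  · calc c i '' s = c i '' (g '' (f '' s)) := by rw [hs.image_image]
      _ = g '' (c i '' (f '' s)) := Set.image_comm fun a => (hg i a).symm
      _ = t := by rw [h, ht.image_image]

lemma forall_mem_fixed_iff_of_leftInvOn {c : α → α} (hf : Function.Commute f c)
    (hg : Function.Commute g c) (hs : Set.LeftInvOn g f s) :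
    (∀ a ∈ s, c a = a) ↔ ∀ b ∈ f '' s, c b = b := by
  refine ⟨?_, fun h a ha => ?_⟩
  · rintro h _ ⟨a, ha, rfl⟩
    rw [← hf a, h a ha]
  · rw [← hs ha, ← hg, h _ (Set.mem_image_of_mem f ha)]

end Orbits

lemma exists_pow_eq_self_and_pow_prime_pow_eq_one {M : Type*} [Monoid M] {p : ℕ} (hp : p.Prime)
    {x z : M} (hx : ∃ b, x ^ p ^ b = 1) (hz : IsOfFinOrder z) :
    ∃ j : ℕ, x ^ j = x ∧ ∃ a, (z ^ j) ^ p ^ a = 1 := by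
  obtain ⟨b, hb⟩ := hx
  set n := orderOf z
  have hcop : (ordCompl[p] n).Coprime (orderOf x) :=
    ((Nat.coprime_ordCompl hp hz.orderOf_pos.ne').pow_left b).symm.coprime_dvd_right
      (orderOf_dvd_of_pow_eq_one hb)
  obtain ⟨e, he⟩ := exists_pow_eq_self_of_coprime hcop
  -- `j = m e` with `m` the `p'`-part of `orderOf z`: it fixes `x` and kills the `p'`-part of `z`
  refine ⟨ordCompl[p] n * e, by rwa [pow_mul], n.factorization p, ?_⟩
  rw [← pow_mul, mul_right_comm, mul_comm (ordCompl[p] n), Nat.ordProj_mul_ordCompl_eq_self,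
    pow_mul, pow_orderOf_eq_one, one_pow]

section PCore

variable {p : ℕ} {G : Type*} [Group G]

lemma le_pCore {H : Subgroup G} (hH : H.Normal) (hp : IsPGroup p H) : H ≤ pCore p G :=
  le_biSup id (s := {K : Subgroup G | K.Normal ∧ IsPGroup p K}) ⟨hH, hp⟩

lemma isPGroup_pCore [Fact p.Prime] : IsPGroup p (pCore p G) :=
  Sylow.biSup_of_normal _ _ (fun _ hK => hK.2) fun _ hK => hK.1

instance pCore_characteristic : (pCore p G).Characteristic := by
  refine Subgroup.characteristic_iff_map_le.mpr fun φ => ?_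
  rw [Subgroup.map_le_iff_le_comap]
  refine iSup₂_le fun H hH => Subgroup.map_le_iff_le_comap.mp (le_pCore ?_ ?_)
  · exact hH.1.map _ φ.surjective
  · exact hH.2.map _

variable {A H : Subgroup G}

lemma le_pCore_map (hHA : H ≤ A) (hp : IsPGroup p H)
    (hnorm : A ≤ Subgroup.normalizer (H : Set G)) : H ≤ (pCore p A).map A.subtype := by
  rw [← Subgroup.map_subgroupOf_eq_of_le hHA]
  refine Subgroup.map_mono (le_pCore ?_ (hp.comap_of_injective _ A.subtype_injective))
  exact (Subgroup.normal_subgroupOf_iff_le_normalizer hHA).mpr hnorm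

lemma commute_of_mem_map_center {z a : G} (hz : z ∈ (Subgroup.center A).map A.subtype)
    (ha : a ∈ A) : Commute z a := by
  obtain ⟨c, hc, rfl⟩ := hz
  exact congrArg Subtype.val (Subgroup.mem_center_iff.mp hc ⟨a, ha⟩).symm

lemma le_pCore_map_of_le_center (hH : H ≤ (Subgroup.center A).map A.subtype)
    (hp : IsPGroup p H) : H ≤ (pCore p A).map A.subtype := by
  refine le_pCore_map (hH.trans (Subgroup.map_subtype_le _)) hp fun a ha => ?_
  refine Subgroup.centralizer_le_normalizer _ (Subgroup.mem_centralizer_iff.mpr fun h hh => ?_)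
  exact (commute_of_mem_map_center (hH hh) ha).eq

lemma pCore_map_eq_inf {K N : Subgroup G} [K.Normal] [N.Normal] [Fact p.Prime] (hKN : K ≤ N) :
    (pCore p K).map K.subtype = (pCore p N).map N.subtype ⊓ K := by
  refine le_antisymm (le_inf ?_ (Subgroup.map_subtype_le _)) ?_
  · refine le_pCore_map ((Subgroup.map_subtype_le _).trans hKN) (isPGroup_pCore.map _)
      Subgroup.le_normalizer_of_normal
  · refine le_pCore_map inf_le_right ((isPGroup_pCore.map _).to_le inf_le_left)
      Subgroup.le_normalizer_of_normal

end PCore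

lemma pCore_map_sup_inf_eq {p : ℕ} [Fact p.Prime] {G : Type*} [Group G] [Finite G]
    {K N P : Subgroup G} [K.Normal] (hKN : K ≤ N)
    (hprod : K ⊔ (Subgroup.center N).map N.subtype = N) (hP : IsPGroup p P)
    (hOP : (pCore p N).map N.subtype ≤ P) (hPN : P ≤ N) :
    (pCore p N).map N.subtype ⊔ (P ⊓ K) = P := by
  refine le_antisymm (sup_le hOP inf_le_left) fun x hx => ?_
  obtain ⟨k, hk, z, hz, rfl⟩ :
      x ∈ (K : Set G) * ((Subgroup.center N).map N.subtype : Set G) := by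
    rw [← Subgroup.normal_mul, hprod]; exact hPN hx
  obtain ⟨b, hb⟩ := hP ⟨k * z, hx⟩
  obtain ⟨j, hj, a, ha⟩ := exists_pow_eq_self_and_pow_prime_pow_eq_one Fact.out
    ⟨b, by simpa using congrArg Subtype.val hb⟩ (isOfFinOrder_of_finite z)
  have hzO : z ^ j ∈ (pCore p N).map N.subtype :=
    le_pCore_map_of_le_center (Subgroup.zpowers_le.mpr (pow_mem hz j))
      (IsPGroup.of_card_dvd_pow ((Nat.card_zpowers (z ^ j)).symm ▸ orderOf_dvd_of_pow_eq_one ha))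
      (Subgroup.mem_zpowers _)
  have hkz : k * z = k ^ j * z ^ j := by
    rw [← (commute_of_mem_map_center hz (hKN hk)).symm.mul_pow, hj]
  have hkP : k ^ j ∈ P := by
    simpa [hkz] using mul_mem hx (inv_mem (hOP hzO))
  change k * z ∈ _
  rw [hkz]
  exact mul_mem (Subgroup.mem_sup_right ⟨hkP, pow_mem hk j⟩) (Subgroup.mem_sup_left hzO)

lemma Subgroup.sup_inf_eq_of_inf_le {G : Type*} [Group G] {O Q K : Subgroup G} [O.Normal]
    (hQK : Q ≤ K) (hOK : O ⊓ K ≤ Q) : (O ⊔ Q) ⊓ K = Q := by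
  refine le_antisymm (fun x hx => ?_) (le_inf le_sup_right hQK)
  obtain ⟨u, hu, q, hq, rfl⟩ : x ∈ ((K ⊓ O : Subgroup G) : Set G) * (Q : Set G) := by
    rw [Subgroup.inf_mul_assoc _ _ _ hQK, ← Subgroup.normal_mul]
    exact ⟨hx.2, hx.1⟩
  exact mul_mem (hOK ⟨hu.2, hu.1⟩) hq

section Chains

variable {p : ℕ} {G : Type*} [Group G]

def pSubgroupsBetween (p : ℕ) (U B : Subgroup G) : Set (Subgroup G) :=
  {P | IsPGroup p P ∧ U ≤ P ∧ P ≤ B}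

lemma IsPChainSet.subset {B U : Subgroup G} {C : Set (Subgroup G)} (hC : IsPChainSet p B U C) :
    C ⊆ pSubgroupsBetween p U B :=
  hC.2.2.1

lemma IsPChainSet.image {B U B' U' : Subgroup G} {C : Set (Subgroup G)}
    {f : Subgroup G → Subgroup G} (hC : IsPChainSet p B U C) (hf : Monotone f) (hfU : f U = U')
    (hmaps : Set.MapsTo f (pSubgroupsBetween p U B) (pSubgroupsBetween p U' B')) :
    IsPChainSet p B' U' (f '' C) :=
  ⟨hC.1.image f, hfU ▸ Set.mem_image_of_mem f hC.2.1, (hmaps.mono_left hC.subset).image_subset,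
    hC.2.2.2.image_of_map_rel _ _ f fun _ _ h => hf h⟩

variable [Fact p.Prime] {K N : Subgroup G} [N.Normal]

lemma mapsTo_inf_pSubgroupsBetween [K.Normal] (hKN : K ≤ N) :
    Set.MapsTo (· ⊓ K) (pSubgroupsBetween p ((pCore p N).map N.subtype) N)
      (pSubgroupsBetween p ((pCore p K).map K.subtype) K) := fun _ ⟨hP, hOP, _⟩ =>
  ⟨hP.to_le inf_le_left, (pCore_map_eq_inf hKN).trans_le (inf_le_inf_right K hOP), inf_le_right⟩

lemma mapsTo_sup_pSubgroupsBetween (hKN : K ≤ N) :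
    Set.MapsTo ((pCore p N).map N.subtype ⊔ ·)
      (pSubgroupsBetween p ((pCore p K).map K.subtype) K)
      (pSubgroupsBetween p ((pCore p N).map N.subtype) N) := fun _ ⟨hQ, _, hQK⟩ =>
  ⟨(isPGroup_pCore.map _).to_sup_of_normal_left hQ, le_sup_left,
    sup_le (Subgroup.map_subtype_le _) (hQK.trans hKN)⟩

lemma invOn_sup_inf_pSubgroupsBetween [Finite G] [K.Normal] (hKN : K ≤ N)
    (hprod : K ⊔ (Subgroup.center N).map N.subtype = N) :
    Set.InvOn ((pCore p N).map N.subtype ⊔ ·) (· ⊓ K)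
      (pSubgroupsBetween p ((pCore p N).map N.subtype) N)
      (pSubgroupsBetween p ((pCore p K).map K.subtype) K) :=
  ⟨fun _ ⟨hP, hOP, hPN⟩ => pCore_map_sup_inf_eq hKN hprod hP hOP hPN,
    fun _ ⟨_, hOQ, hQK⟩ =>
      Subgroup.sup_inf_eq_of_inf_le hQK ((pCore_map_eq_inf hKN).symm.trans_le hOQ)⟩

end Chains

theorem stmt_13_general (p : ℕ) [Fact p.Prime] {G : Type*} [Group G] [Finite G]
    (K N : Subgroup G) [K.Normal] [N.Normal] (hKN : K ≤ N)
    (hprod : K ⊔ (Subgroup.center ↥N).map N.subtype = N) :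
    ∃ Φ : {C : Set (Subgroup G) // IsPChainSet p N ((pCore p ↥N).map N.subtype) C} →
          {C : Set (Subgroup G) // IsPChainSet p K ((pCore p ↥K).map K.subtype) C},
      -- Φ induces a bijection between the sets of G-orbits of chains
      (∀ σ τ, (∃ g : G, conjSub g '' σ.val = τ.val) ↔
        (∃ g : G, conjSub g '' (Φ σ).val = (Φ τ).val)) ∧
      (∀ τ' : {C : Set (Subgroup G) // IsPChainSet p K ((pCore p ↥K).map K.subtype) C},
        ∃ σ, ∃ g : G, conjSub g '' (Φ σ).val = τ'.val) ∧
      -- lengths are preserved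
      (∀ σ, (Φ σ).val.ncard = σ.val.ncard) ∧
      -- the G-stabilizers of corresponding chains are equal
      (∀ σ (g : G), (∀ P ∈ σ.val, conjSub g P = P) ↔
        (∀ P ∈ (Φ σ).val, conjSub g P = P)) := by
  have hinv := invOn_sup_inf_pSubgroupsBetween (p := p) hKN hprod
  refine ⟨fun σ => ⟨(· ⊓ K) '' σ.1, σ.2.image (fun _ _ h => inf_le_inf_right K h)
      (pCore_map_eq_inf hKN).symm (mapsTo_inf_pSubgroupsBetween hKN)⟩,
    fun σ τ => ?_, fun τ => ?_, fun σ => ?_, fun σ g => ?_⟩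
  · exact exists_image_eq_iff_of_leftInvOn (commute_inf_conjSub K) (commute_sup_conjSub _)
      (hinv.1.mono σ.2.subset) (hinv.1.mono τ.2.subset)
  · have hO : (pCore p N).map N.subtype ⊔ (pCore p K).map K.subtype =
        (pCore p N).map N.subtype := by
      rw [pCore_map_eq_inf hKN, sup_inf_self]
    refine ⟨⟨_, τ.2.image (fun _ _ h => sup_le_sup_left h _) hO
      (mapsTo_sup_pSubgroupsBetween hKN)⟩, 1, ?_⟩
    rw [conjSub_one, Set.image_id]
    exact hinv.2.image_image' τ.2.subset
  · exact (hinv.1.injOn.mono σ.2.subset).ncard_image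
  · exact forall_mem_fixed_iff_of_leftInvOn (commute_inf_conjSub K g) (commute_sup_conjSub _ g)
      (hinv.1.mono σ.2.subset)

theorem stmt_13 (p : ℕ) [Fact p.Prime] {G : Type*} [Group G] [Finite G]
    (K N : Subgroup G) [K.Normal] [N.Normal] (hKN : K ≤ N)
    (hprod : K ⊔ (Subgroup.center ↥N).map N.subtype = N)
    (hZK : (Subgroup.center ↥K).map K.subtype
        = K ⊓ (Subgroup.center ↥N).map N.subtype)
    (hOp : (pCore p ↥N).map N.subtype ≤ (Subgroup.center ↥N).map N.subtype) :
    ∃ Φ : {C : Set (Subgroup G) // IsPChainSet p N ((pCore p ↥N).map N.subtype) C} →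
          {C : Set (Subgroup G) // IsPChainSet p K ((pCore p ↥K).map K.subtype) C},
      -- Φ induces a bijection between the sets of G-orbits of chains
      (∀ σ τ, (∃ g : G, conjSub g '' σ.val = τ.val) ↔
        (∃ g : G, conjSub g '' (Φ σ).val = (Φ τ).val)) ∧
      (∀ τ' : {C : Set (Subgroup G) // IsPChainSet p K ((pCore p ↥K).map K.subtype) C},
        ∃ σ, ∃ g : G, conjSub g '' (Φ σ).val = τ'.val) ∧
      -- lengths are preserved
      (∀ σ, (Φ σ).val.ncard = σ.val.ncard) ∧
      -- the G-stabilizers of corresponding chains are equal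
      (∀ σ (g : G), (∀ P ∈ σ.val, conjSub g P = P) ↔
        (∀ P ∈ (Φ σ).val, conjSub g P = P)) :=
  stmt_13_general p K N hKN hprod
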